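/- arXiv:1004.2223 — 4 statements merged into one kernel-verified Lean document; each statement's English description precedes it below -/
import Mathlib

section
/- With $D$ the Demazure-type operator $D(f) = (f - {}^s f)/(1 - X_1 X_2^{-1})$ on the Laurent polynomial ring $A[X_1^{\pm1},X_2^{\pm1}]$: if $p$ is an $m$-restricted polynomial (i.e. all monomials $X_1^i X_2^j$ appearing in $p$ satisfy $0 \le i, j \le m-1$), then $D(p)$ is also $m$-restricted. -/
/-!
Write `d` for the coefficients of `D(p)` and `q = p - ˢp`. Comparing coefficients in
`D(p) (1 - X₁X₂⁻¹) = q` gives `d(i, j) - d(i - 1, j + 1) = q(i, j)`, so along each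
antidiagonal `i + j = c` the coefficients of `D(p)` only change where `q` may be nonzero,
i.e. inside the box `[0, m-1]²`. Past either end of the box `d` is therefore constant on a
half-infinite ray of the antidiagonal; having finite support, it vanishes there.
-/

noncomputable section

/-- The Laurent polynomial ring `A[X₁^{±1}, X₂^{±1}]`. -/
abbrev Lau (A : Type) [CommRing A] : Type := AddMonoidAlgebra A (ℤ × ℤ)

variable (A : Type) [CommRing A]

/-- The monomial `X₁^i X₂^j`. -/
def Xm (i j : ℤ) : Lau A := AddMonoidAlgebra.single (i, j) 1

/-- The automorphism `s` interchanging `X₁` and `X₂`. -/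
def sw (p : Lau A) : Lau A := AddMonoidAlgebra.ofCoeff (Finsupp.equivMapDomain (Equiv.prodComm ℤ ℤ) p.coeff)

/-- `p` is `m`-restricted: all monomials `X₁^i X₂^j` occurring in `p`
satisfy `0 ≤ i, j ≤ m-1`. -/
def Res (m : ℕ) (p : Lau A) : Prop :=
  ∀ ab ∈ p.coeff.support, 0 ≤ ab.1 ∧ ab.1 ≤ (m : ℤ) - 1 ∧ 0 ≤ ab.2 ∧ ab.2 ≤ (m : ℤ) - 1

namespace Int

variable {M : Type*} [Zero M] {f : ℤ → M}

theorem eq_zero_of_support_finite_of_forall_ge (hf : (Function.support f).Finite) {i : ℤ}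
    (h : ∀ n ≥ i, f (n + 1) = f n) : f i = 0 := by
  have hconst : ∀ n ≥ i, f n = f i := fun n hn ↦ by
    induction n, hn using Int.leInduction with
    | base => rfl
    | succ n hn ih => rw [h n hn, ih]
  by_contra hi
  exact Set.Ici_infinite i <| hf.subset fun n hn ↦ by
    rwa [Function.mem_support, hconst n hn]

theorem eq_zero_of_support_finite_of_forall_lt (hf : (Function.support f).Finite) {i : ℤ}
    (h : ∀ n < i, f (n + 1) = f n) : f i = 0 := by
  have hconst : ∀ n ≤ i, f n = f i := fun n hn ↦ by
    induction n, hn using Int.leInductionDown with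
    | base => rfl
    | pred n hn ih => rw [← h (n - 1) (by omega), sub_add_cancel, ih]
  by_contra hi
  exact Set.Iic_infinite i <| hf.subset fun n hn ↦ by
    rwa [Function.mem_support, hconst n hn]

end Int

section

variable {A} {m : ℕ} {p q d : Lau A}

theorem coeff_sw (p : Lau A) (i j : ℤ) : (sw A p).coeff (i, j) = p.coeff (j, i) := by
  simp [sw]

theorem coeff_mul_one_sub_X₁_mul_X₂_inv (p : Lau A) (i j : ℤ) :
    (p * (1 - Xm A 1 0 * Xm A 0 (-1))).coeff (i, j) = p.coeff (i, j) - p.coeff (i - 1, j + 1) := by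
  have hX : Xm A 1 0 * Xm A 0 (-1) = AddMonoidAlgebra.single (1, -1) 1 := by
    simp [Xm, AddMonoidAlgebra.single_mul_single]
  have hshift : ((i, j) : ℤ × ℤ) + -(1, -1) = (i - 1, j + 1) := by
    simp [sub_eq_add_neg]
  rw [hX, mul_sub, mul_one, AddMonoidAlgebra.coeff_sub, Finsupp.sub_apply,
    AddMonoidAlgebra.coeff_mul_single_apply, hshift, mul_one]

theorem Res.coeff_eq_zero (hp : Res A m p) {i j : ℤ}
    (hij : ¬(0 ≤ i ∧ i ≤ (m : ℤ) - 1 ∧ 0 ≤ j ∧ j ≤ (m : ℤ) - 1)) : p.coeff (i, j) = 0 := by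
  by_contra hne
  exact hij (hp (i, j) (Finsupp.mem_support_iff.2 hne))

theorem Res.sw (hp : Res A m p) : Res A m (sw A p) := by
  rintro ⟨i, j⟩ hij
  rw [Finsupp.mem_support_iff, coeff_sw] at hij
  obtain ⟨h₁, h₂, h₃, h₄⟩ := hp (j, i) (Finsupp.mem_support_iff.2 hij)
  exact ⟨h₃, h₄, h₁, h₂⟩

theorem Res.sub (hp : Res A m p) (hq : Res A m q) : Res A m (p - q) := fun ab hab ↦ by
  rw [AddMonoidAlgebra.coeff_sub] at hab
  rcases Finset.mem_union.1 (Finsupp.support_sub hab) with h | h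
  exacts [hp ab h, hq ab h]

theorem Res.of_mul_one_sub_X₁_mul_X₂_inv (hq : Res A m q)
    (hd : d * (1 - Xm A 1 0 * Xm A 0 (-1)) = q) : Res A m d := by
  rintro ⟨i, j⟩ hij
  by_contra hout
  refine Finsupp.mem_support_iff.1 hij ?_
  set f : ℤ → A := fun n ↦ d.coeff (n, i + j - n)
  have hf : (Function.support f).Finite :=
    (d.coeff.support.finite_toSet.preimage (f := fun n ↦ (n, i + j - n))
      fun a _ b _ hab ↦ congrArg Prod.fst hab).subset fun _ hn ↦ Finsupp.mem_support_iff.2 hn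
  have hstep : ∀ n, f (n + 1) = f n + q.coeff (n + 1, i + j - (n + 1)) := fun n ↦ by
    have := coeff_mul_one_sub_X₁_mul_X₂_inv d (n + 1) (i + j - (n + 1))
    rw [hd, add_sub_cancel_right, show i + j - (n + 1) + 1 = i + j - n by ring] at this
    simp only [f, this, add_sub_cancel]
  have hfi : f i = d.coeff (i, j) := by simp only [f, add_sub_cancel_left]
  rw [← hfi]
  by_cases hup : (m : ℤ) - 1 < i ∨ j < 0
  · refine Int.eq_zero_of_support_finite_of_forall_ge hf fun n hn ↦ ?_
    rw [hstep, hq.coeff_eq_zero (by omega), add_zero]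
  · refine Int.eq_zero_of_support_finite_of_forall_lt hf fun n hn ↦ ?_
    rw [hstep, hq.coeff_eq_zero (by omega), add_zero]

end

theorem stmt1 (m : ℕ) (p Dp : Lau A) (hp : Res A m p)
    (hD : Dp * (1 - Xm A 1 0 * Xm A 0 (-1)) = p - sw A p) :
    Res A m Dp :=
  (hp.sub hp.sw).of_mul_one_sub_X₁_mul_X₂_inv hD
end
end

section
/- Define $D(f) = (f - {}^s f)/(1 - X_1 X_2^{-1})$ and $D_s(f) = (f - {}^s f)/(1 - X_1^{-1} X_2)$ on the Laurent polynomial ring over an integral domain. For an $m$-restricted polynomial $p$, one has $D(p) = D_s(p)$ if and only if $p = {}^s p$ (i.e. $p$ is symmetric). -/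
noncomputable section

variable (A : Type) [CommRing A]

theorem eq_iff_eq_zero_of_mul_one_sub {R : Type*} [CommRing R] [NoZeroDivisors R]
    {u v d e f : R} (huv : u ≠ v) (hu : u ≠ 1) (hv : v ≠ 1)
    (hd : d * (1 - u) = f) (he : e * (1 - v) = f) : d = e ↔ f = 0 := by
  constructor
  · rintro rfl
    have : d * (v - u) = 0 := by linear_combination hd - he
    rw [← hd, (mul_eq_zero.mp this).resolve_right (sub_ne_zero.mpr huv.symm), zero_mul]
  · rintro rfl
    rw [(mul_eq_zero.mp hd).resolve_right (sub_ne_zero.mpr hu.symm),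
      (mul_eq_zero.mp he).resolve_right (sub_ne_zero.mpr hv.symm)]

section Monomials

variable {A}

theorem Xm_mul_Xm (i j k l : ℤ) : Xm A i j * Xm A k l = Xm A (i + k) (j + l) := by
  simp [Xm, AddMonoidAlgebra.single_mul_single]

theorem Xm_inj [Nontrivial A] {i j k l : ℤ} : Xm A i j = Xm A k l ↔ i = k ∧ j = l := by
  rw [Xm, Xm, AddMonoidAlgebra.single_left_inj one_ne_zero, Prod.mk.injEq]

theorem Xm_eq_one_iff [Nontrivial A] {i j : ℤ} : Xm A i j = 1 ↔ i = 0 ∧ j = 0 :=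
  Xm_inj (k := 0) (l := 0)

end Monomials

theorem stmt2 [IsDomain A] (p Dp Dsp : Lau A)
    (hD : Dp * (1 - Xm A 1 0 * Xm A 0 (-1)) = p - sw A p)
    (hDs : Dsp * (1 - Xm A (-1) 0 * Xm A 0 1) = p - sw A p) :
    Dp = Dsp ↔ sw A p = p := by
  simp only [Xm_mul_Xm, add_zero, zero_add] at hD hDs
  rw [eq_iff_eq_zero_of_mul_one_sub _ _ _ hD hDs, sub_eq_zero, eq_comm]
  all_goals norm_num [Xm_inj, Xm_eq_one_iff]
end
end

section
/- Let $S_m^W$ be the $A$-module of symmetric $m$-restricted polynomials in $X_1, X_2$, with basis the monomial symmetric functions $m_{ij} = X_1^i X_2^j + X_1^j X_2^i$ for $0 \le i < j \le m-1$ and $m_{ii} = X_1^i X_2^i$. Then the $A$-submodule $M = \{g \in S_m^W : X_1 g \in S_m^W\}$ (where $X_1 g$ is taken modulo the relation that $X_1^m$ is replaced using the cyclotomic relation; equivalently, $M = \ker \phi$ where $\phi(g) = d(X_1 g)$ with $d$ the antisymmetrization projector and multiplication truncated to $S_m$) is a free $A$-module of rank $m$. -/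
/-!
Let `f = ∏ᵢ (x - vᵢ)` and let `Δ = (f(X₁) - f(X₂)) / (X₁ - X₂)` be its divided difference. The
classes of `X₁ᵏ Δ`, `k < m`, form a basis of `M`.

They lie in `M`: modulo `f(X₁)`, `X₁ᵏ Δ` is congruent to `X₁ᵏ Δ - f(X₁) (X₁ᵏ - X₂ᵏ) / (X₁ - X₂)`,
which is symmetric because its product with `X₁ - X₂` is antisymmetric. They are independent:
evaluating at `X₁ = X₂ = vⱼ` sends `Δ` to `f'(vⱼ) ≠ 0` and leaves a Vandermonde system. They span:
if `g` and `X₁ g` are symmetric modulo `(f(X₁), f(X₂))`, then so is `X₂ g`, so `(X₁ - X₂) g` lies in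
the ideal, and cancelling `X₁ - X₂` gives `g ≡ -w Δ` for some `w`. Modulo the ideal
`w Δ ≡ w(X₁, X₁) Δ`, and as `f` is monic with invertible constant term, the relation `f(X₁) Δ ≡ 0`
expresses every `X₁ᵉ Δ`, `e ∈ ℤ`, through those with `0 ≤ e < m`.
-/

noncomputable section

/-- The ring `A = ℤ[q^{±1}, v₁^{±1}, …, v_m^{±1}]`, realized as the group
algebra of `ℤ × ℤ^m` over `ℤ`. -/
abbrev Av (m : ℕ) : Type := AddMonoidAlgebra ℤ (ℤ × (Fin m → ℤ))

/-- The element `q`. -/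
def qv (m : ℕ) : Av m := AddMonoidAlgebra.single (1, 0) 1

/-- The element `vᵢ`. -/
def vv (m : ℕ) (i : Fin m) : Av m := AddMonoidAlgebra.single (0, Pi.single i 1) 1

/-- The `j`-th elementary symmetric polynomial of `v₁, …, v_m`. -/
def ev (m : ℕ) (j : ℕ) : Av m :=
  ∑ s ∈ Finset.powersetCard j (Finset.univ : Finset (Fin m)), ∏ i ∈ s, vv m i

variable (A : Type) [CommRing A]

/-- Constants. -/
def CC (a : A) : Lau A := algebraMap A (Lau A) a

/-- `f_v(X₁) = ∏ᵢ (X₁ - vᵢ)`. -/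
def fv1 (m : ℕ) : Lau (Av m) := ∏ i : Fin m, (Xm (Av m) 1 0 - CC (Av m) (vv m i))

/-- `f_v(X₂) = ∏ᵢ (X₂ - vᵢ)`. -/
def fv2 (m : ℕ) : Lau (Av m) := ∏ i : Fin m, (Xm (Av m) 0 1 - CC (Av m) (vv m i))

/-- The complete homogeneous symmetric polynomial `H_k` in `X₁, X₂`. -/
def Hc (k : ℕ) : Lau A := ∑ i ∈ Finset.range (k + 1), Xm A (i : ℤ) ((k : ℤ) - (i : ℤ))

/-- The element `z = (-1)^{m+1} e_m + X₁X₂ ∑_{j=0}^{m-2} (-1)^j e_j H_{m-2-j}`. -/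
def zel (m : ℕ) : Lau (Av m) :=
  CC (Av m) ((-1 : Av m) ^ (m + 1) * ev m m) +
    Xm (Av m) 1 1 *
      ∑ j ∈ Finset.range (m - 1), CC (Av m) ((-1 : Av m) ^ j * ev m j) * Hc (Av m) (m - 2 - j)

/-- The quotient `R_m` of the Laurent polynomial ring by `(f_v(X₁), f_v(X₂))`,
free with basis the restricted monomials. -/
abbrev Rmq (m : ℕ) : Type := Lau (Av m) ⧸ Ideal.span {fv1 m, fv2 m}

/-- The quotient map. -/
def pr (m : ℕ) : Lau (Av m) →+* Rmq m := Ideal.Quotient.mk _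

/-- Membership in `R_m^W`: being the image of a symmetric Laurent polynomial. -/
def symW (m : ℕ) (x : Rmq m) : Prop := ∃ g : Lau (Av m), sw (Av m) g = g ∧ pr m g = x

/-- The monomial symmetric functions `m_{ij}`. -/
def msf (i j : ℤ) : Lau A := if i = j then Xm A i i else Xm A i j + Xm A j i

lemma Units.sub_dvd_zpow_sub_zpow {R : Type*} [CommRing R] (x y : Rˣ) (k : ℤ) :
    (x : R) - y ∣ ((x ^ k : Rˣ) : R) - ((y ^ k : Rˣ) : R) := by
  obtain ⟨n, rfl | rfl⟩ := Int.eq_nat_or_neg k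
  · simpa using sub_dvd_pow_sub_pow (x : R) y n
  · have hinv (z : Rˣ) : ((z ^ (-(n : ℤ)) : Rˣ) : R) * (z : R) ^ n = 1 := by
      rw [← Units.val_pow_eq_pow_val, ← Units.val_mul, ← zpow_natCast, ← zpow_add,
        neg_add_cancel, zpow_zero, Units.val_one]
    have h : ((x ^ (-(n : ℤ)) : Rˣ) : R) - ((y ^ (-(n : ℤ)) : Rˣ) : R) =
        ((x ^ (-(n : ℤ)) : Rˣ) : R) * ((y ^ (-(n : ℤ)) : Rˣ) : R) *
          ((y : R) ^ n - (x : R) ^ n) := by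
      linear_combination (-((x ^ (-(n : ℤ)) : Rˣ) : R)) * hinv y + ((y ^ (-(n : ℤ)) : Rˣ) : R) * hinv x
    rw [h]
    exact (dvd_sub_comm.mp (sub_dvd_pow_sub_pow _ _ n)).mul_left _

section LinearRecurrence
open Polynomial Finset
variable {B R : Type*} [CommRing B] [CommRing R] [Algebra B R] {p : B[X]} {x : Rˣ} {y : R}

lemma sum_coeff_smul_zpow_mul_eq_zero (hy : aeval (x : R) p * y = 0) (t : ℤ) :
    ∑ k ∈ range (p.natDegree + 1), p.coeff k • (((x ^ (t + k) : Rˣ) : R) * y) = 0 := by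
  have h := congrArg (((x ^ t : Rˣ) : R) * ·) hy
  simp only [aeval_eq_sum_range, Finset.sum_mul, Finset.mul_sum, mul_zero] at h
  rw [← h]
  refine sum_congr rfl fun k _ => ?_
  simp only [zpow_add, zpow_natCast, Units.val_mul, Units.val_pow_eq_pow_val, Algebra.smul_def]
  ring

/-- The relation `p(x) y = 0` expresses `x ^ (t + n) y` through the `n` preceding terms (as `p` is
monic) and `x ^ t y` through the `n` following ones (as `p.coeff 0` is a unit), so a window of `n`
consecutive terms slides over all of `ℤ`. -/
theorem zpow_mul_mem_span_pow_mul {n : ℕ} (hp : p.Monic) (hn : p.natDegree = n)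
    (h0 : IsUnit (p.coeff 0)) (hy : aeval (x : R) p * y = 0) (e : ℤ) :
    ((x ^ e : Rˣ) : R) * y ∈
      Submodule.span B (Set.range fun k : Fin n => (x : R) ^ (k : ℕ) * y) := by
  set N := Submodule.span B (Set.range fun k : Fin n => (x : R) ^ (k : ℕ) * y)
  have rel : ∀ t : ℤ, ∑ k ∈ range (n + 1), p.coeff k • (((x ^ (t + k) : Rˣ) : R) * y) = 0 :=
    hn ▸ sum_coeff_smul_zpow_mul_eq_zero hy
  have top : ∀ t : ℤ, (∀ k < n, ((x ^ (t + k) : Rˣ) : R) * y ∈ N) →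
      ((x ^ (t + n) : Rˣ) : R) * y ∈ N := by
    intro t ht
    have h := rel t
    rw [sum_range_succ, ← hn, hp.coeff_natDegree, hn, one_smul, add_eq_zero_iff_neg_eq',
      neg_eq_iff_eq_neg] at h
    rw [h]
    exact N.neg_mem (N.sum_mem fun k hk => N.smul_mem _ (ht k (mem_range.mp hk)))
  have bottom : ∀ t : ℤ, (∀ k < n, ((x ^ (t + 1 + k) : Rˣ) : R) * y ∈ N) →
      ((x ^ t : Rˣ) : R) * y ∈ N := by
    intro t ht
    have h := rel t
    rw [sum_range_succ', Nat.cast_zero, add_zero, add_eq_zero_iff_neg_eq] at h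
    obtain ⟨u, hu⟩ := h0
    rw [← one_smul B (((x ^ t : Rˣ) : R) * y), ← u.inv_mul, mul_smul, hu, ← h]
    refine N.smul_mem _ (N.neg_mem (N.sum_mem fun k hk => N.smul_mem _ ?_))
    simpa [add_assoc, add_comm (1 : ℤ)] using ht k (mem_range.mp hk)
  have window : ∀ t : ℤ, ∀ k < n, ((x ^ (t + k) : Rˣ) : R) * y ∈ N := by
    intro t
    induction t using Int.induction_on with
    | zero =>
      intro k hk
      simpa using (Submodule.subset_span ⟨⟨k, hk⟩, rfl⟩ : (x : R) ^ k * y ∈ N)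
    | succ t ih =>
      intro k hk
      rcases lt_or_eq_of_le (Nat.succ_le_of_lt hk) with h | rfl
      · simpa [add_assoc, add_comm (1 : ℤ)] using ih (k + 1) h
      · simpa [add_assoc, add_comm (1 : ℤ)] using top t ih
    | pred t ih =>
      intro k hk
      rcases k with _ | k
      · simpa using bottom (-t - 1) (by simpa using ih)
      · simpa [add_assoc] using ih k (by omega)
  simpa using top (e - n) (window (e - n))

end LinearRecurrence

namespace Lau
open Finset AddMonoidAlgebra Polynomial

variable {A}

section CommRing

lemma Xm_mul (a b c d : ℤ) : Xm A a b * Xm A c d = Xm A (a + c) (b + d) := by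
  simp [Xm, single_mul_single]

def X₁ : (Lau A)ˣ := Units.map (of A (ℤ × ℤ)) (toUnits (Multiplicative.ofAdd (1, 0)))

def X₂ : (Lau A)ˣ := Units.map (of A (ℤ × ℤ)) (toUnits (Multiplicative.ofAdd (0, 1)))

lemma X₁_zpow (e : ℤ) : ((X₁ ^ e : (Lau A)ˣ) : Lau A) = Xm A e 0 := by
  simp [X₁, ← map_zpow, Xm, ← ofAdd_zsmul]

lemma X₂_zpow (e : ℤ) : ((X₂ ^ e : (Lau A)ˣ) : Lau A) = Xm A 0 e := by
  simp [X₂, ← map_zpow, Xm, ← ofAdd_zsmul]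

lemma X₁_val : ((X₁ : (Lau A)ˣ) : Lau A) = Xm A 1 0 := by
  simpa using X₁_zpow (A := A) 1

lemma X₂_val : ((X₂ : (Lau A)ˣ) : Lau A) = Xm A 0 1 := by
  simpa using X₂_zpow (A := A) 1

def swapAlg : Lau A ≃ₐ[A] Lau A := domCongr A A (AddEquiv.prodComm (M := ℤ) (N := ℤ))

lemma sw_eq_swapAlg (f : Lau A) : sw A f = swapAlg f := by
  ext x
  simp [sw, swapAlg, coeff_domCongr, Finsupp.equivMapDomain]

lemma swapAlg_Xm (a b : ℤ) : swapAlg (Xm A a b) = Xm A b a := domCongr_single _ _ _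

lemma swapAlg_aeval_X₁ (p : A[X]) : swapAlg (aeval (Xm A 1 0) p) = aeval (Xm A 0 1) p := by
  rw [← aeval_algHom_apply, swapAlg_Xm]

lemma swapAlg_aeval_X₂ (p : A[X]) : swapAlg (aeval (Xm A 0 1) p) = aeval (Xm A 1 0) p := by
  rw [← aeval_algHom_apply, swapAlg_Xm]

/-- The substitution `X₂ ↦ X₁`. -/
def diag : Lau A →ₐ[A] Lau A :=
  mapDomainAlgHom A A ((AddMonoidHom.inl ℤ ℤ).comp (AddMonoidHom.coprod (.id ℤ) (.id ℤ)))

lemma diag_single (a b : ℤ) (c : A) : diag (single (a, b) c) = single (a + b, 0) c := by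
  simp only [diag, mapDomainAlgHom_apply, mapDomain_single]
  rfl

lemma diag_Xm (a b : ℤ) : diag (Xm A a b) = Xm A (a + b) 0 := diag_single a b 1

lemma diag_aeval_X₁ (p : A[X]) : diag (aeval (Xm A 1 0) p) = aeval (Xm A 1 0) p := by
  rw [← aeval_algHom_apply, diag_Xm, add_zero]

lemma diag_X₁_sub_X₂ : diag (Xm A 1 0 - Xm A 0 1) = 0 := by
  rw [map_sub, diag_Xm, diag_Xm, add_zero, zero_add, sub_self]

lemma sub_dvd_sub_diag (f : Lau A) : Xm A 1 0 - Xm A 0 1 ∣ f - diag f := by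
  induction f using AddMonoidAlgebra.induction_on with
  | of g =>
    obtain ⟨a, b⟩ := g
    have h : Xm A a b - diag (Xm A a b) = -(Xm A a 0 * (Xm A b 0 - Xm A 0 b)) := by
      rw [diag_Xm, mul_sub, Xm_mul, Xm_mul]
      simp
    have hd := Units.sub_dvd_zpow_sub_zpow (X₁ : (Lau A)ˣ) X₂ b
    rw [X₁_zpow, X₂_zpow, X₁_val, X₂_val] at hd
    rw [show of A (ℤ × ℤ) (Multiplicative.ofAdd (a, b)) = Xm A a b from rfl, h]
    exact (hd.mul_left _).neg_right
  | add f g hf hg =>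
    rw [map_add, add_sub_add_comm]
    exact dvd_add hf hg
  | smul c f hf =>
    rw [map_smul, ← smul_sub, Algebra.smul_def]
    exact hf.mul_left _

/-- Evaluation at `X₁ = X₂ = u`. -/
def evalDiag (u : Aˣ) : Lau A →ₐ[A] A :=
  lift A A (ℤ × ℤ) ((Units.coeHom A).comp ((zpowersHom Aˣ u).comp
    (AddMonoidHom.toMultiplicative (AddMonoidHom.coprod (.id ℤ) (.id ℤ)))))

lemma evalDiag_Xm (u : Aˣ) (a b : ℤ) : evalDiag u (Xm A a b) = ((u ^ (a + b) : Aˣ) : A) := by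
  simp [evalDiag, Xm]

lemma evalDiag_X₁ (u : Aˣ) : evalDiag u (Xm A 1 0) = u := by simp [evalDiag_Xm]

lemma evalDiag_X₂ (u : Aˣ) : evalDiag u (Xm A 0 1) = u := by simp [evalDiag_Xm]

lemma evalDiag_CC (u : Aˣ) (c : A) : evalDiag u (CC A c) = c := (evalDiag u).commutes c

lemma evalDiag_aeval_Xm (u : Aˣ) (a b : ℤ) (p : A[X]) :
    evalDiag u (aeval (Xm A a b) p) = p.eval ((u ^ (a + b) : Aˣ) : A) := by
  rw [← aeval_algHom_apply, evalDiag_Xm, coe_aeval_eq_eval]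

lemma aeval_X₁_injective : Function.Injective (aeval (Xm A 1 0) : A[X] → Lau A) := by
  have h : (aeval (Xm A 1 0) : A[X] →ₐ[A] Lau A) =
      (mapDomainAlgHom A A (AddMonoidHom.inl ℤ ℤ)).comp toLaurentAlg := by
    refine Polynomial.algHom_ext ?_
    simp only [aeval_X, AlgHom.comp_apply, toLaurentAlg_apply, toLaurent_X, mapDomainAlgHom_apply,
      LaurentPolynomial.T, mapDomain_single]
    rfl
  intro p q hpq
  simp only [h, AlgHom.comp_apply, mapDomainAlgHom_apply, toLaurentAlg_apply] at hpq
  exact toLaurent_injective (mapDomain_injective (Prod.mk_left_injective 0) hpq)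

/-- The divided difference `(p(X₁) - p(X₂)) / (X₁ - X₂)`, built from
`(X₁ᵏ - X₂ᵏ) / (X₁ - X₂) = ∑_{i<k} X₁ⁱ X₂^(k-1-i)`. -/
def divDiff (p : A[X]) : Lau A :=
  p.sum fun k a => CC A a * ∑ i ∈ range k, Xm A 1 0 ^ i * Xm A 0 1 ^ (k - 1 - i)

lemma sub_mul_divDiff (p : A[X]) :
    (Xm A 1 0 - Xm A 0 1) * divDiff p = aeval (Xm A 1 0) p - aeval (Xm A 0 1) p := by
  rw [divDiff, Polynomial.sum, Finset.mul_sum, aeval_def, aeval_def, eval₂_eq_sum, eval₂_eq_sum,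
    Polynomial.sum, Polynomial.sum, ← Finset.sum_sub_distrib]
  refine Finset.sum_congr rfl fun k _ => ?_
  rw [mul_left_comm, mul_comm (Xm A 1 0 - Xm A 0 1), geom_sum₂_mul, mul_sub]
  rfl

lemma evalDiag_divDiff (u : Aˣ) (p : A[X]) :
    evalDiag u (divDiff p) = (derivative p).eval (u : A) := by
  simp only [divDiff, Polynomial.sum, map_sum, map_mul, map_pow, evalDiag_X₁, evalDiag_X₂,
    evalDiag_CC, geom_sum₂_self, derivative_apply, eval_finsetSum]
  simp [mul_assoc]

end CommRing

section IsDomain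
variable [IsDomain A]

lemma X₁_sub_X₂_ne_zero : Xm A 1 0 - Xm A 0 1 ≠ 0 :=
  sub_ne_zero.mpr fun h => by simpa using (single_left_inj one_ne_zero).1 h

lemma swapAlg_eq_self_of_sub_mul_eq {f g : Lau A} (h : (Xm A 1 0 - Xm A 0 1) * f = g)
    (hg : swapAlg g = -g) : swapAlg f = f := by
  have hs := congrArg swapAlg h
  rw [map_mul, map_sub, swapAlg_Xm, swapAlg_Xm, hg, ← h] at hs
  exact mul_left_cancel₀ X₁_sub_X₂_ne_zero (by linear_combination (-1 : Lau A) * hs)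

lemma exists_swapAlg_eq_self_pow_mul_divDiff_sub (p : A[X]) (n : ℕ) :
    ∃ s, swapAlg (Xm A 1 0 ^ n * divDiff p - aeval (Xm A 1 0) p * s) =
      Xm A 1 0 ^ n * divDiff p - aeval (Xm A 1 0) p * s := by
  obtain ⟨s, hs⟩ := sub_dvd_pow_sub_pow (Xm A 1 0) (Xm A 0 1) n
  refine ⟨s, swapAlg_eq_self_of_sub_mul_eq
    (g := aeval (Xm A 1 0) p * Xm A 0 1 ^ n - aeval (Xm A 0 1) p * Xm A 1 0 ^ n) ?_ ?_⟩
  · linear_combination Xm A 1 0 ^ n * sub_mul_divDiff p + aeval (Xm A 1 0) p * hs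
  · simp only [map_sub, map_mul, map_pow, swapAlg_aeval_X₁, swapAlg_aeval_X₂, swapAlg_Xm]
    ring

/-- From `(X₁ - X₂) g = u p(X₁) + w p(X₂)` we get `(X₁ - X₂)(g + w Δ) = (u + w) p(X₁)`;
substituting `X₂ ↦ X₁` shows that `X₁ - X₂` divides `u + w`. -/
lemma exists_eq_mul_sub_mul_divDiff {p : A[X]} (hp : p ≠ 0) {g : Lau A}
    (hg : (Xm A 1 0 - Xm A 0 1) * g ∈ Ideal.span {aeval (Xm A 1 0) p, aeval (Xm A 0 1) p}) :
    ∃ r w, g = aeval (Xm A 1 0) p * r - w * divDiff p := by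
  obtain ⟨u, w, huw⟩ := Ideal.mem_span_pair.mp hg
  have key : (Xm A 1 0 - Xm A 0 1) * (g + w * divDiff p) = (u + w) * aeval (Xm A 1 0) p := by
    linear_combination -huw + w * sub_mul_divDiff p
  have hdiag : diag (u + w) = 0 := by
    have h := congrArg diag key
    rw [map_mul, map_mul, diag_X₁_sub_X₂, zero_mul, diag_aeval_X₁, eq_comm] at h
    exact (mul_eq_zero.mp h).resolve_right ((map_ne_zero_iff _ aeval_X₁_injective).mpr hp)
  obtain ⟨r, hr⟩ := sub_dvd_sub_diag (u + w)
  rw [hdiag, sub_zero] at hr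
  refine ⟨r, w, mul_left_cancel₀ X₁_sub_X₂_ne_zero ?_⟩
  linear_combination key + aeval (Xm A 1 0) p * hr

end IsDomain

section Quotient
variable {I : Ideal (Lau A)} {p : A[X]}
  (hI : I = Ideal.span {aeval (Xm A 1 0) p, aeval (Xm A 0 1) p})
include hI

lemma aeval_X₁_mem : aeval (Xm A 1 0) p ∈ I := hI ▸ Ideal.subset_span (by simp)

lemma aeval_X₂_mem : aeval (Xm A 0 1) p ∈ I := hI ▸ Ideal.subset_span (by simp)

lemma swapAlg_mem {f : Lau A} (hf : f ∈ I) : swapAlg f ∈ I := by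
  rw [hI, Ideal.mem_span_pair] at *
  obtain ⟨u, w, rfl⟩ := hf
  exact ⟨swapAlg w, swapAlg u, by
    simp only [map_add, map_mul, swapAlg_aeval_X₁, swapAlg_aeval_X₂]
    ring⟩

lemma evalDiag_eq_zero_of_mem {u : Aˣ} (hu : p.eval (u : A) = 0) {f : Lau A} (hf : f ∈ I) :
    evalDiag u f = 0 := by
  rw [hI, Ideal.mem_span_pair] at hf
  obtain ⟨x, y, rfl⟩ := hf
  rw [map_add, map_mul, map_mul, evalDiag_aeval_Xm, evalDiag_aeval_Xm]
  simp [hu]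

lemma exists_swap_mk_eq_pow_mul_divDiff [IsDomain A] (n : ℕ) :
    ∃ g, sw A g = g ∧
      Ideal.Quotient.mk I g =
        Ideal.Quotient.mk I (Xm A 1 0) ^ n * Ideal.Quotient.mk I (divDiff p) := by
  obtain ⟨s, hs⟩ := exists_swapAlg_eq_self_pow_mul_divDiff_sub p n
  refine ⟨_, (sw_eq_swapAlg _).trans hs, ?_⟩
  rw [map_sub, Ideal.Quotient.eq_zero_iff_mem.mpr (I.mul_mem_right s (aeval_X₁_mem hI)), sub_zero,
    map_mul, map_pow]

lemma mk_mul_divDiff_eq_mk_diag_mul (w : Lau A) :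
    Ideal.Quotient.mk I (w * divDiff p) = Ideal.Quotient.mk I (diag w * divDiff p) := by
  obtain ⟨r, hr⟩ := sub_dvd_sub_diag w
  rw [Ideal.Quotient.eq, ← sub_mul, hr, mul_right_comm, sub_mul_divDiff]
  exact I.mul_mem_right _ (I.sub_mem (aeval_X₁_mem hI) (aeval_X₂_mem hI))

lemma mk_mul_divDiff_mem_span {n : ℕ} (hp : p.Monic) (hn : p.natDegree = n)
    (h0 : IsUnit (p.coeff 0)) (w : Lau A) :
    Ideal.Quotient.mk I (w * divDiff p) ∈ Submodule.span A (Set.range fun k : Fin n =>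
      Ideal.Quotient.mk I (Xm A 1 0) ^ (k : ℕ) * Ideal.Quotient.mk I (divDiff p)) := by
  have hy : aeval (Ideal.Quotient.mk I (Xm A 1 0)) p * Ideal.Quotient.mk I (divDiff p) = 0 := by
    rw [← Ideal.Quotient.mkₐ_eq_mk A, aeval_algHom_apply, ← map_mul, Ideal.Quotient.mkₐ_eq_mk,
      Ideal.Quotient.eq_zero_iff_mem]
    exact I.mul_mem_right _ (aeval_X₁_mem hI)
  induction w using AddMonoidAlgebra.induction_on with
  | of g =>
    obtain ⟨a, b⟩ := g
    rw [show of A (ℤ × ℤ) (Multiplicative.ofAdd (a, b)) = Xm A a b from rfl,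
      mk_mul_divDiff_eq_mk_diag_mul hI, diag_Xm, ← X₁_zpow (a + b), map_mul]
    have h := zpow_mul_mem_span_pow_mul
      (x := Units.map (Ideal.Quotient.mk I : Lau A →* Lau A ⧸ I) X₁) hp hn h0
      (by simpa only [Units.coe_map, MonoidHom.coe_coe, X₁_val] using hy) (a + b)
    simpa only [← map_zpow, Units.coe_map, MonoidHom.coe_coe, X₁_val] using h
  | add f g hf hg =>
    rw [add_mul, map_add]
    exact Submodule.add_mem _ hf hg
  | smul c f hf =>
    rw [smul_mul_assoc, ← Ideal.Quotient.mkₐ_eq_mk A, map_smul, Ideal.Quotient.mkₐ_eq_mk]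
    exact Submodule.smul_mem _ _ hf

lemma mem_span_of_swap_eq_self [IsDomain A] {n : ℕ} (hp : p.Monic) (hn : p.natDegree = n)
    (h0 : IsUnit (p.coeff 0)) {z : Lau A ⧸ I} (hz : ∃ g, sw A g = g ∧ Ideal.Quotient.mk I g = z)
    (hXz : ∃ h, sw A h = h ∧ Ideal.Quotient.mk I h = Ideal.Quotient.mk I (Xm A 1 0) * z) :
    z ∈ Submodule.span A (Set.range fun k : Fin n =>
      Ideal.Quotient.mk I (Xm A 1 0) ^ (k : ℕ) * Ideal.Quotient.mk I (divDiff p)) := by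
  obtain ⟨g, hg, rfl⟩ := hz
  obtain ⟨h, hh, hmk⟩ := hXz
  rw [sw_eq_swapAlg] at hg hh
  have h₁ : Xm A 1 0 * g - h ∈ I := Ideal.Quotient.eq.mp (by rw [map_mul, hmk])
  have h₂ : Xm A 0 1 * g - h ∈ I := by
    simpa only [map_sub, map_mul, swapAlg_Xm, hg, hh] using swapAlg_mem hI h₁
  have h₃ : (Xm A 1 0 - Xm A 0 1) * g ∈ I := by
    convert I.sub_mem h₁ h₂ using 1
    ring
  rw [hI] at h₃
  obtain ⟨r, w, rfl⟩ := exists_eq_mul_sub_mul_divDiff hp.ne_zero h₃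
  rw [map_sub, Ideal.Quotient.eq_zero_iff_mem.mpr (I.mul_mem_right r (aeval_X₁_mem hI)), zero_sub]
  exact Submodule.neg_mem _ (mk_mul_divDiff_mem_span hI hp hn h0 w)

lemma linearIndependent_pow_mul_divDiff [IsDomain A] {n : ℕ} {c : Fin n → Aˣ}
    (hc : Function.Injective fun i => (c i : A))
    (hpc : p = Lagrange.nodal univ fun i => (c i : A)) :
    LinearIndependent A fun k : Fin n =>
      Ideal.Quotient.mk I (Xm A 1 0) ^ (k : ℕ) * Ideal.Quotient.mk I (divDiff p) := by
  rw [Fintype.linearIndependent_iff]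
  intro g hg
  refine congrFun (Matrix.eq_zero_of_forall_index_sum_mul_pow_eq_zero hc fun j => ?_)
  have hroot : p.eval (c j : A) = 0 := by
    rw [hpc]
    exact Lagrange.eval_nodal_at_node (v := fun i => (c i : A)) (mem_univ j)
  have hderiv : (derivative p).eval (c j : A) ≠ 0 := by
    classical
    have h := Lagrange.eval_nodal_derivative_eval_node_eq (v := fun i => (c i : A)) (mem_univ j)
    rw [hpc, h]
    exact Lagrange.eval_nodal_not_at_node fun i hi => hc.ne (ne_of_mem_erase hi).symm
  have hmem : ∑ k : Fin n, g k • (Xm A 1 0 ^ (k : ℕ) * divDiff p) ∈ I := by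
    rw [← Ideal.Quotient.eq_zero_iff_mem, map_sum, ← hg]
    refine sum_congr rfl fun k _ => ?_
    rw [← map_pow, ← map_mul]
    exact map_smul (Ideal.Quotient.mkₐ A I) (g k) _
  have h := evalDiag_eq_zero_of_mem hI hroot hmem
  simp only [map_sum, map_smul, map_mul, map_pow, evalDiag_X₁, evalDiag_divDiff, smul_eq_mul] at h
  simp_rw [← mul_assoc, ← Finset.sum_mul] at h
  exact (mul_eq_zero.mp h).resolve_right hderiv

end Quotient

end Lau

open Finset Polynomial Lagrange in
lemma isUnit_coeff_zero_nodal {R ι : Type*} [CommRing R] (s : Finset ι) (c : ι → Rˣ) :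
    IsUnit ((nodal s fun i => (c i : R)).coeff 0) := by
  rw [coeff_zero_eq_eval_zero, eval_nodal]
  simp

def vunit (m : ℕ) (i : Fin m) : (Av m)ˣ :=
  Units.map (AddMonoidAlgebra.of ℤ _) (toUnits (Multiplicative.ofAdd (0, Pi.single i 1)))

lemma vv_injective (m : ℕ) : Function.Injective (vv m) := by
  intro i j h
  have := congrArg Prod.snd ((AddMonoidAlgebra.single_left_inj one_ne_zero).1 h)
  by_contra hij
  simpa [Pi.single_apply, hij] using congrFun this i

open Polynomial Lagrange in
lemma fv1_eq (m : ℕ) : fv1 m = aeval (Xm (Av m) 1 0) (nodal Finset.univ (vv m)) := by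
  simp only [fv1, nodal, map_prod, map_sub, aeval_X, aeval_C, _root_.CC]

open Polynomial Lagrange in
lemma fv2_eq (m : ℕ) : fv2 m = aeval (Xm (Av m) 0 1) (nodal Finset.univ (vv m)) := by
  simp only [fv2, nodal, map_prod, map_sub, aeval_X, aeval_C, _root_.CC]

open Lau Polynomial Lagrange in
theorem stmt5 (m : ℕ) :
    ∃ b : Fin m → Rmq m,
      (∀ k, symW m (b k) ∧ symW m (pr m (Xm (Av m) 1 0) * b k)) ∧
      LinearIndependent (Av m) b ∧
      ∀ x : Rmq m, symW m x → symW m (pr m (Xm (Av m) 1 0) * x) →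
        x ∈ Submodule.span (Av m) (Set.range b) := by
  set p := nodal Finset.univ fun i => (vunit m i : Av m)
  have hI : Ideal.span {fv1 m, fv2 m} =
      Ideal.span {aeval (Xm (Av m) 1 0) p, aeval (Xm (Av m) 0 1) p} := by
    rw [fv1_eq, fv2_eq]
    rfl
  refine ⟨fun k => pr m (Xm (Av m) 1 0) ^ (k : ℕ) * pr m (divDiff p), fun k => ⟨?_, ?_⟩,
    linearIndependent_pow_mul_divDiff hI (vv_injective m) rfl, fun x hx hXx =>
      mem_span_of_swap_eq_self hI nodal_monic (by simp [p]) (isUnit_coeff_zero_nodal _ _) hx hXx⟩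
  · exact exists_swap_mk_eq_pow_mul_divDiff hI k
  · rw [← mul_assoc, ← pow_succ']
    exact exists_swap_mk_eq_pow_mul_divDiff hI (k + 1)
end
end

section
/- Let $f_{\mathbf v}(x) = \prod_{i=1}^m (x - v_i) = \sum_{j=0}^m (-1)^{m-j} e_{m-j} x^j$ where $e_j$ are the elementary symmetric polynomials in $v_1, \dots, v_m$. In the affine Hecke algebra $H_2^{\mathrm{aff}}$ over $A = \mathbb{Z}[q^{\pm1}, v_1^{\pm1}, \dots, v_m^{\pm1}]$, setting $f_2 = T f_{\mathbf v}(X_1) T$, one has $q f_{\mathbf v}(X_2) = f_2 + (q-1) z T$ where $z = (-1)^{m+1} e_m + X_1 X_2 \sum_{j=0}^{m-2} (-1)^j e_j H_{m-2-j}$ and $H_k = \sum_{i=0}^k X_1^i X_2^{k-i}$. -/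
noncomputable section

variable (A : Type) [CommRing A]

/-! With `g = -(f_v(X₂) + z)` one has `g (1 - X₁X₂⁻¹) = f_v(X₁) - f_v(X₂)`, so the Bernstein
relation gives `T f_v(X₁) = f_v(X₂) T + (q - 1) g`. Multiplying on the right by `T` and using
`T² = (q - 1) T + q` yields `T f_v(X₁) T = q f_v(X₂) + (q - 1)(f_v(X₂) + g) T = q f_v(X₂) - (q - 1) z T`.
The Laurent identity is checked monomial by monomial: since `H_k (X₁ - X₂) = X₁^{k+1} - X₂^{k+1}`,
`(X₂^{k+2} + X₁X₂ H_k)(X₂ - X₁) = X₂ (X₂^{k+2} - X₁^{k+2})`; the linear term of `f_v` needs no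
correction, and its constant term `(-1)^m e_m` is cancelled by the first summand of `z`. -/

open Finset

section HeckeRelations

variable {H : Type*} [Ring H] {Q T : H}

lemma mul_self_eq_of_sub_mul_add_one_eq_zero (h : (T - Q) * (T + 1) = 0) :
    T * T = (Q - 1) * T + Q := by
  have expand : T * T = (T - Q) * (T + 1) + (Q - 1) * T + Q := by noncomm_ring
  rw [expand, h, zero_add]

lemma mul_mul_eq_of_mul_eq {a b g : H} (hQ : Commute Q b) (hT : T * T = (Q - 1) * T + Q)
    (h : T * a = b * T + (Q - 1) * g) :
    T * a * T = Q * b + (Q - 1) * ((b + g) * T) := by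
  calc T * a * T = b * (T * T) + (Q - 1) * (g * T) := by rw [h]; noncomm_ring
    _ = b * (Q - 1) * T + b * Q + (Q - 1) * (g * T) := by rw [hT]; noncomm_ring
    _ = (Q - 1) * b * T + Q * b + (Q - 1) * (g * T) := by
      rw [(hQ.sub_left (Commute.one_left b)).eq, hQ.eq]
    _ = Q * b + (Q - 1) * ((b + g) * T) := by noncomm_ring

end HeckeRelations

lemma sum_pow_add_mul_sub_eq {R : Type*} [CommRing R] {x y : R} (a h : ℕ → R)
    (hh : ∀ k, h k * (x - y) = x ^ (k + 1) - y ^ (k + 1)) {m : ℕ} (hm : 1 ≤ m) :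
    (∑ j ∈ range (m + 1), a j * y ^ (m - j) +
        (-a m + x * y * ∑ j ∈ range (m - 1), a j * h (m - 2 - j))) * (y - x) =
      y * (∑ j ∈ range (m + 1), a j * y ^ (m - j) - ∑ j ∈ range (m + 1), a j * x ^ (m - j)) := by
  obtain ⟨n, rfl⟩ : ∃ n, m = n + 1 := ⟨m - 1, by omega⟩
  have term : ∀ j ∈ range n,
      (a j * y ^ (n + 1 - j) + x * y * (a j * h (n + 1 - 2 - j))) * (y - x) =
        y * (a j * y ^ (n + 1 - j) - a j * x ^ (n + 1 - j)) := by
    intro j hj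
    have hexp : n + 1 - j = n + 1 - 2 - j + 1 + 1 := by have := mem_range.mp hj; omega
    rw [hexp]
    linear_combination -x * y * a j * hh (n + 1 - 2 - j)
  have hsum := sum_congr rfl term
  rw [← sum_mul, sum_add_distrib, ← mul_sum, ← mul_sum, sum_sub_distrib] at hsum
  rw [Nat.add_sub_cancel, sum_range_succ _ (n + 1), sum_range_succ _ n, sum_range_succ _ (n + 1),
    sum_range_succ _ n, Nat.sub_self, Nat.add_sub_cancel_left]
  linear_combination hsum

lemma Finset.prod_sub_eq_sum_esymm {ι R : Type*} [CommRing R] (s : Finset ι) (c : ι → R) (y : R) :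
    ∏ i ∈ s, (y - c i) =
      ∑ j ∈ range (#s + 1), (-1) ^ j * (∑ t ∈ s.powersetCard j, ∏ i ∈ t, c i) * y ^ (#s - j) := by
  have vieta := congrArg (Polynomial.eval y) (Multiset.prod_X_sub_X_eq_sum_esymm (s.val.map c))
  simpa [Polynomial.eval_multiset_prod, Polynomial.eval_finsetSum, Polynomial.eval_prod,
    Finset.esymm_map_val, mul_assoc] using vieta

lemma Xm_mul (a b c d : ℤ) : Xm A a b * Xm A c d = Xm A (a + c) (b + d) := by
  simp [Xm, AddMonoidAlgebra.single_mul_single]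

lemma Xm_pow (a b : ℤ) (n : ℕ) : Xm A a b ^ n = Xm A (n * a) (n * b) := by
  simp [Xm, AddMonoidAlgebra.single_pow]

lemma Hc_eq_sum (k : ℕ) : Hc A k = ∑ i ∈ range (k + 1), Xm A 1 0 ^ i * Xm A 0 1 ^ (k - i) := by
  refine sum_congr rfl fun i hi => ?_
  rw [Xm_pow, Xm_pow, Xm_mul, Nat.cast_sub (Nat.lt_succ_iff.mp (mem_range.mp hi))]
  congr 1 <;> ring

lemma Hc_mul_sub (k : ℕ) :
    Hc A k * (Xm A 1 0 - Xm A 0 1) = Xm A 1 0 ^ (k + 1) - Xm A 0 1 ^ (k + 1) := by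
  simpa [Hc_eq_sum] using geom_sum₂_mul (Xm A 1 0) (Xm A 0 1) (k + 1)

lemma sw_eq_domCongr (p : Lau A) :
    sw A p = AddMonoidAlgebra.domCongr A A (AddEquiv.prodComm : ℤ × ℤ ≃+ ℤ × ℤ) p := by
  apply AddMonoidAlgebra.coeff_injective
  ext x
  simp [sw]

lemma sw_Xm (a b : ℤ) : sw A (Xm A a b) = Xm A b a := by
  simp [sw_eq_domCongr, Xm, AddMonoidAlgebra.domCongr_single]

lemma sw_fv1 (m : ℕ) : sw (Av m) (fv1 m) = fv2 m := by
  rw [sw_eq_domCongr, fv1, fv2, map_prod]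
  refine prod_congr rfl fun i _ => ?_
  rw [map_sub, ← sw_eq_domCongr, sw_Xm, CC, AlgEquiv.commutes]

lemma prod_sub_CC_vv (m : ℕ) (y : Lau (Av m)) :
    ∏ i : Fin m, (y - CC (Av m) (vv m i)) =
      ∑ j ∈ range (m + 1), (-1) ^ j * CC (Av m) (ev m j) * y ^ (m - j) := by
  simp [Finset.prod_sub_eq_sum_esymm, CC, ev, map_sum, map_prod]

lemma zel_eq (m : ℕ) :
    zel m = -((-1) ^ m * CC (Av m) (ev m m)) + Xm (Av m) 1 0 * Xm (Av m) 0 1 *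
      ∑ j ∈ range (m - 1), (-1) ^ j * CC (Av m) (ev m j) * Hc (Av m) (m - 2 - j) := by
  simp only [zel, CC, map_mul, map_pow, map_neg, map_one, Xm_mul, add_zero, zero_add]
  ring

lemma neg_fv2_add_zel_mul (m : ℕ) (hm : 1 ≤ m) :
    -(fv2 m + zel m) * (1 - Xm (Av m) 1 0 * Xm (Av m) 0 (-1)) = fv1 m - sw (Av m) (fv1 m) := by
  have key : (fv2 m + zel m) * (Xm (Av m) 0 1 - Xm (Av m) 1 0) =
      Xm (Av m) 0 1 * (fv2 m - fv1 m) := by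
    rw [fv1, fv2, prod_sub_CC_vv, prod_sub_CC_vv, zel_eq]
    exact sum_pow_add_mul_sub_eq _ _ (Hc_mul_sub (Av m)) hm
  have hinv : Xm (Av m) 0 1 * Xm (Av m) 0 (-1) = 1 := by rw [Xm_mul]; rfl
  rw [sw_fv1]
  linear_combination (-Xm (Av m) 0 (-1)) * key + (zel m + fv1 m) * hinv

theorem stmt9_general (m : ℕ) (hm : 1 ≤ m) (H : Type) [Ring H] [Algebra (Av m) H]
    (ι : Lau (Av m) →ₐ[Av m] H) (T : H)
    (hquad : (T - algebraMap (Av m) H (qv m)) * (T + 1) = 0)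
    (hcomm : ∀ f g : Lau (Av m),
      g * (1 - Xm (Av m) 1 0 * Xm (Av m) 0 (-1)) = f - sw (Av m) f →
      T * ι f = ι (sw (Av m) f) * T + algebraMap (Av m) H (qv m - 1) * ι g) :
    algebraMap (Av m) H (qv m) * ι (fv2 m) =
      T * ι (fv1 m) * T + algebraMap (Av m) H (qv m - 1) * (ι (zel m) * T) := by
  have hT := hcomm (fv1 m) _ (neg_fv2_add_zel_mul m hm)
  rw [sw_fv1, map_sub, map_one] at hT
  have hTfT := mul_mul_eq_of_mul_eq (Algebra.commute_algebraMap_left (qv m) (ι (fv2 m)))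
    (mul_self_eq_of_sub_mul_add_one_eq_zero hquad) hT
  rw [map_sub, map_one, hTfT, map_neg, map_add]
  noncomm_ring

theorem stmt9 (m : ℕ) (hm : 1 ≤ m) (H : Type) [Ring H] [Algebra (Av m) H]
    (ι : Lau (Av m) →ₐ[Av m] H) (T : H)
    (hinj : Function.Injective ι)
    (hfree : ∀ h : H, ∃! fg : Lau (Av m) × Lau (Av m), h = ι fg.1 + ι fg.2 * T)
    (hquad : (T - algebraMap (Av m) H (qv m)) * (T + 1) = 0)
    (hTX : T * ι (Xm (Av m) 1 0) * T = algebraMap (Av m) H (qv m) * ι (Xm (Av m) 0 1))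
    (hcomm : ∀ f g : Lau (Av m),
      g * (1 - Xm (Av m) 1 0 * Xm (Av m) 0 (-1)) = f - sw (Av m) f →
      T * ι f = ι (sw (Av m) f) * T + algebraMap (Av m) H (qv m - 1) * ι g) :
    algebraMap (Av m) H (qv m) * ι (fv2 m) =
      T * ι (fv1 m) * T + algebraMap (Av m) H (qv m - 1) * (ι (zel m) * T) :=
  stmt9_general m hm H ι T hquad hcomm
end
end
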